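/- Let f : ℝ^p → ℝ be twice differentiable at the point λ = γ ∘ γ (with γ ∈ ℝ^p, (γ ∘ γ)_k = γ_k²), and define g = f ∘ F with F(γ) = γ ∘ γ. Then g is twice differentiable at γ and its Hessian matrix satisfies ∇²g(γ) = 2 D_{∇f(λ)} + 4 (γγᵀ) ∘ ∇²f(λ); entrywise, ∂²g/∂γ_h∂γ_k (γ) = 2 (∇f(λ))_k 𝟙(k = h) + 4 γ_k γ_h (∂²f/∂λ_h∂λ_k)(λ). -/

import Mathlib

/-!
The squaring map `z ↦ z * z` of a commutative normed algebra has derivative `v ↦ 2 z v`, so by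
the chain rule `Dg(x) = Df(x²) ∘ (2x ·)` near `γ`. Differentiating this composition of two
operator-valued maps by the product rule gives
`D²g(γ)(v, u) = Df(γ²)(2 v u) + D²f(γ²)(2 γ v, 2 γ u)`.
In `ℝ^p` with coordinate vectors, `e_h e_k = δ_{hk} e_k` and `γ e_h = γ_h e_h`.
-/

open Filter Topology ContinuousLinearMap

theorem HasFDerivAt.fderiv_clm_apply_const {𝕜 E F G : Type*} [NontriviallyNormedField 𝕜]
    [NormedAddCommGroup E] [NormedSpace 𝕜 E] [NormedAddCommGroup F] [NormedSpace 𝕜 F]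
    [NormedAddCommGroup G] [NormedSpace 𝕜 G] {c : E → F →L[𝕜] G} {c' : E →L[𝕜] F →L[𝕜] G}
    {x : E} (hc : HasFDerivAt c c' x) (u : F) (v : E) :
    fderiv 𝕜 (fun y => c y u) x v = c' v u := by
  simp [(hc.clm_apply (hasFDerivAt_const u x)).fderiv]

section MulSelf

variable {𝕜 𝔸 F : Type*} [NontriviallyNormedField 𝕜] [NormedCommRing 𝔸] [NormedAlgebra 𝕜 𝔸]
  [NormedAddCommGroup F] [NormedSpace 𝕜 F] {f : 𝔸 → F} {γ : 𝔸}

theorem hasFDerivAt_mul_self (x : 𝔸) :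
    HasFDerivAt (fun z : 𝔸 => z * z) ((2 : 𝕜) • mul 𝕜 𝔸 x) x := by
  refine ((hasFDerivAt_id x).fun_mul (hasFDerivAt_id x)).congr_fderiv ?_
  ext v
  simp [two_smul]

theorem hasFDerivAt_comp_mul_self {f' : 𝔸 →L[𝕜] F} {x : 𝔸} (hf : HasFDerivAt f f' (x * x)) :
    HasFDerivAt (fun z => f (z * z)) (f'.comp ((2 : 𝕜) • mul 𝕜 𝔸 x)) x :=
  hf.comp (f := fun z => z * z) x (hasFDerivAt_mul_self x)

theorem eventually_differentiableAt_mul_self (hf : ∀ᶠ y in 𝓝 (γ * γ), DifferentiableAt 𝕜 f y) :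
    ∀ᶠ x in 𝓝 γ, DifferentiableAt 𝕜 f (x * x) :=
  ((continuous_id.mul continuous_id).tendsto γ).eventually hf

theorem fderiv_comp_mul_self_eventuallyEq (hf : ∀ᶠ y in 𝓝 (γ * γ), DifferentiableAt 𝕜 f y) :
    fderiv 𝕜 (fun z => f (z * z)) =ᶠ[𝓝 γ]
      fun x => (fderiv 𝕜 f (x * x)).comp ((2 : 𝕜) • mul 𝕜 𝔸 x) := by
  filter_upwards [eventually_differentiableAt_mul_self hf] with x hx
  exact (hasFDerivAt_comp_mul_self hx.hasFDerivAt).fderiv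

theorem hasFDerivAt_fderiv_comp_mul_self (hf : ∀ᶠ y in 𝓝 (γ * γ), DifferentiableAt 𝕜 f y)
    (hf' : DifferentiableAt 𝕜 (fderiv 𝕜 f) (γ * γ)) :
    HasFDerivAt (fderiv 𝕜 (fun z => f (z * z)))
      ((compL 𝕜 𝔸 𝔸 F (fderiv 𝕜 f (γ * γ))).comp ((2 : 𝕜) • mul 𝕜 𝔸) +
        ((compL 𝕜 𝔸 𝔸 F).flip ((2 : 𝕜) • mul 𝕜 𝔸 γ)).comp
          ((fderiv 𝕜 (fderiv 𝕜 f) (γ * γ)).comp ((2 : 𝕜) • mul 𝕜 𝔸 γ))) γ :=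
  ((hasFDerivAt_comp_mul_self hf'.hasFDerivAt).clm_comp
    ((2 : 𝕜) • mul 𝕜 𝔸).hasFDerivAt).congr_of_eventuallyEq (fderiv_comp_mul_self_eventuallyEq hf)

theorem fderiv_fderiv_comp_mul_self_apply (hf : ∀ᶠ y in 𝓝 (γ * γ), DifferentiableAt 𝕜 f y)
    (hf' : DifferentiableAt 𝕜 (fderiv 𝕜 f) (γ * γ)) (u v : 𝔸) :
    fderiv 𝕜 (fun x => fderiv 𝕜 (fun z => f (z * z)) x u) γ v =
      fderiv 𝕜 f (γ * γ) ((2 : 𝕜) • (v * u)) +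
        fderiv 𝕜 (fderiv 𝕜 f) (γ * γ) ((2 : 𝕜) • (γ * v)) ((2 : 𝕜) • (γ * u)) := by
  rw [(hasFDerivAt_fderiv_comp_mul_self hf hf').fderiv_clm_apply_const]
  simp

end MulSelf

/-- Hessian chain rule for the entrywise-squaring reparameterization: if `f` is
differentiable near `λ = γ ∘ γ` with derivative differentiable at `λ` (twice
differentiable at `λ`), then `g = f ∘ F` with `F(γ) = γ ∘ γ` is twice differentiable
at `γ` and its second partials satisfy
`∂²g/∂γ_h∂γ_k(γ) = 2 (∇f(λ))_k 𝟙(k=h) + 4 γ_k γ_h ∂²f/∂λ_h∂λ_k(λ)`. -/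
theorem hessian_of_squared_reparameterization (p : ℕ)
    (f : (Fin p → ℝ) → ℝ) (γ : Fin p → ℝ)
    (hf1 : ∀ᶠ x in nhds (fun k => γ k * γ k), DifferentiableAt ℝ f x)
    (hf2 : DifferentiableAt ℝ (fderiv ℝ f) (fun k => γ k * γ k)) :
    (∀ᶠ x in nhds γ,
        DifferentiableAt ℝ (fun z : Fin p → ℝ => f (fun k => z k * z k)) x) ∧
    DifferentiableAt ℝ (fderiv ℝ (fun z : Fin p → ℝ => f (fun k => z k * z k))) γ ∧
    ∀ k h : Fin p,
      fderiv ℝ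
          (fun z : Fin p → ℝ =>
            fderiv ℝ (fun w : Fin p → ℝ => f (fun k' => w k' * w k')) z
              (Pi.single k 1)) γ (Pi.single h 1) =
        2 * fderiv ℝ f (fun k' => γ k' * γ k') (Pi.single k 1) * (if k = h then 1 else 0)
          + 4 * γ k * γ h *
            fderiv ℝ (fun z : Fin p → ℝ => fderiv ℝ f z (Pi.single k 1))
              (fun k' => γ k' * γ k') (Pi.single h 1) := by
  simp only [← Pi.mul_def] at hf1 hf2 ⊢
  refine ⟨?_, (hasFDerivAt_fderiv_comp_mul_self hf1 hf2).differentiableAt, fun k h => ?_⟩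
  · filter_upwards [eventually_differentiableAt_mul_self hf1] with x hx
    exact (hasFDerivAt_comp_mul_self hx.hasFDerivAt).differentiableAt
  have mul_single (i : Fin p) : γ * Pi.single i 1 = γ i • Pi.single i 1 := by
    rw [← Pi.single_mul_right, ← smul_eq_mul, Pi.single_smul']
  have single_mul_single : (Pi.single h 1 * Pi.single k 1 : Fin p → ℝ) =
      if k = h then Pi.single k 1 else 0 := by
    split_ifs with hkh
    · subst hkh
      simp [← Pi.single_mul]
    · ext j
      by_cases hj : j = k <;> simp [Pi.single_apply, hj, hkh]
  rw [hf2.hasFDerivAt.fderiv_clm_apply_const, fderiv_fderiv_comp_mul_self_apply hf1 hf2,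
    mul_single, mul_single, single_mul_single]
  simp only [map_smul, smul_apply, smul_eq_mul]
  split_ifs <;> simp only [map_zero, mul_one, mul_zero] <;> ring
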